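/- Let G'(t) = ((3t^4 + 2t^2 + 3)/(8t^4)) * ln|(t+1)/(t-1)| - (3t^2+3)/(4t^3) for t > 0, t ≠ 1. Then G'(t) ≥ 0 for all such t. -/

import Mathlib

/-!
For `0 < t < 1`, the series `log ((1 + t) / (1 - t)) = 2 ∑ t ^ (2k+1) / (2k+1)` truncated after two
terms already gives `Gderiv t ≥ t (3 t² + 11) / 12 ≥ 0`. The case `t > 1` reduces to it through the
symmetry `Gderiv t⁻¹ = t ^ 4 * Gderiv t`.
-/

noncomputable def Gderiv (t : ℝ) : ℝ :=
  ((3 * t ^ 4 + 2 * t ^ 2 + 3) / (8 * t ^ 4)) * Real.log (|(t + 1) / (t - 1)|)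
    - (3 * t ^ 2 + 3) / (4 * t ^ 3)

lemma Real.two_mul_add_le_log_div {x : ℝ} (hx0 : 0 ≤ x) (hx1 : x < 1) :
    2 * x + 2 * x ^ 3 / 3 ≤ Real.log ((1 + x) / (1 - x)) := by
  have hs := Real.hasSum_log_sub_log_of_abs_lt_one (abs_lt.mpr ⟨by linarith, hx1⟩)
  rw [Real.log_div (by linarith) (by linarith)]
  calc 2 * x + 2 * x ^ 3 / 3
      = ∑ k ∈ Finset.range 2, 2 * (1 / (2 * (k : ℝ) + 1)) * x ^ (2 * k + 1) := by
        norm_num [Finset.sum_range_succ, mul_div_right_comm]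
    _ ≤ _ := sum_le_hasSum _ (fun _ _ => by positivity) hs

lemma Gderiv_inv (t : ℝ) : Gderiv t⁻¹ = t ^ 4 * Gderiv t := by
  rcases eq_or_ne t 0 with rfl | ht
  · simp [Gderiv]
  have hlog : |(t⁻¹ + 1) / (t⁻¹ - 1)| = |(t + 1) / (t - 1)| := by
    rcases eq_or_ne t 1 with rfl | ht1
    · norm_num
    rw [← abs_neg ((t + 1) / (t - 1))]
    congr 1
    field_simp
    ring
  unfold Gderiv
  rw [hlog]
  field_simp
  ring

lemma Gderiv_nonneg_of_lt_one {t : ℝ} (ht : 0 < t) (ht1 : t < 1) : 0 ≤ Gderiv t := by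
  have hlog : |(t + 1) / (t - 1)| = (1 + t) / (1 - t) := by
    rw [abs_div, abs_of_pos (by linarith), abs_of_neg (by linarith), neg_sub, add_comm]
  calc 0 ≤ t * (3 * t ^ 2 + 11) / 12 := by positivity
    _ = (3 * t ^ 4 + 2 * t ^ 2 + 3) / (8 * t ^ 4) * (2 * t + 2 * t ^ 3 / 3)
          - (3 * t ^ 2 + 3) / (4 * t ^ 3) := by
        field_simp
        ring
    _ ≤ Gderiv t := by
        rw [Gderiv, hlog]
        gcongr
        exact Real.two_mul_add_le_log_div ht.le ht1

theorem Gderiv_nonneg (t : ℝ) (ht : 0 < t) (ht1 : t ≠ 1) : 0 ≤ Gderiv t := by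
  rcases ht1.lt_or_gt with ht1 | ht1
  · exact Gderiv_nonneg_of_lt_one ht ht1
  · rw [← inv_inv t, Gderiv_inv]
    exact mul_nonneg (by positivity)
      (Gderiv_nonneg_of_lt_one (inv_pos.mpr ht) (inv_lt_one_of_one_lt₀ ht1))
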